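/- arXiv:2503.06865 — 2 statements merged into one kernel-verified Lean document; each statement's English description precedes it below -/
import Mathlib

section
/- Let A be a real symmetric 3×3 matrix with A11 > 0 and det A > 0, and let t ≠ 0. Then the 4×4 matrix D_t (with rows (0, A11·cosh t·sinh t, A12·cosh t·sinh t, A13·cosh t·sinh t), (1, 1, 0, 0), (0, A13·sinh t, cosh t + A23·sinh t, A33·sinh t), (0, -A12·sinh t, -A22·sinh t, cosh t - A23·sinh t)) is invertible. -/
open Real Matrix

noncomputable def Dmat (A : Matrix (Fin 3) (Fin 3) ℝ) (t : ℝ) : Matrix (Fin 4) (Fin 4) ℝ :=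
  !![0, A 0 0 * Real.cosh t * Real.sinh t, A 0 1 * Real.cosh t * Real.sinh t, A 0 2 * Real.cosh t * Real.sinh t;
     1, 1, 0, 0;
     0, A 0 2 * Real.sinh t, Real.cosh t + A 1 2 * Real.sinh t, A 2 2 * Real.sinh t;
     0, -(A 0 1) * Real.sinh t, -(A 1 1) * Real.sinh t, Real.cosh t - A 1 2 * Real.sinh t]

def Omat : Matrix (Fin 4) (Fin 4) ℝ := !![0,-1,0,0; 1,0,0,0; 0,0,0,-1; 0,0,1,0]

def Gmat : Matrix (Fin 4) (Fin 4) ℝ := !![-1,0,0,0; 0,1,0,0; 0,0,1,0; 0,0,0,1]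

theorem det_Dmat {A : Matrix (Fin 3) (Fin 3) ℝ} (hA : A.IsSymm) (t : ℝ) :
    (Dmat A t).det =
      -(cosh t * sinh t * (cosh t ^ 2 * A 0 0 + sinh t ^ 2 * A.det)) := by
  have h10 : A 1 0 = A 0 1 := hA.apply 0 1
  have h20 : A 2 0 = A 0 2 := hA.apply 0 2
  have h21 : A 2 1 = A 1 2 := hA.apply 1 2
  simp [Dmat, det_succ_row_zero, Fin.sum_univ_succ, h10, h20, h21, Fin.succAbove,
    (show (Fin.castSucc 2 : Fin 4) = 2 from rfl)]
  ring

theorem stmt_1 (A : Matrix (Fin 3) (Fin 3) ℝ) (hA : A.IsSymm)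
    (h11 : 0 < A 0 0) (hdet : 0 < A.det) (t : ℝ) (ht : t ≠ 0) :
    IsUnit (Dmat A t) := by
  rw [isUnit_iff_isUnit_det, isUnit_iff_ne_zero, det_Dmat hA, neg_ne_zero]
  have hsinh : sinh t ≠ 0 := sinh_ne_zero.mpr ht
  have hquad : 0 < cosh t ^ 2 * A 0 0 + sinh t ^ 2 * A.det := by positivity
  exact mul_ne_zero (mul_ne_zero (cosh_pos t).ne' hsinh) hquad.ne'
end

section
/- Let Ω be the 4×4 block-diagonal matrix diag(j, j) where j = [[0,-1],[1,0]], let G = diag(-1,1,1,1), and for t ∈ ℝ let D_t be the 4×4 matrix with rows (0, A11·cosh t·sinh t, A12·cosh t·sinh t, A13·cosh t·sinh t), (1, 1, 0, 0), (0, A13·sinh t, cosh t + A23·sinh t, A33·sinh t), (0, -A12·sinh t, -A22·sinh t, cosh t - A23·sinh t), for a symmetric real 3×3 matrix A. Then G · (D_t)ᵀ · Ω · D_t · G = (D_{-t})ᵀ · Ω · D_{-t} for all t. -/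
open Real Matrix

lemma Dmat_transpose (A : Matrix (Fin 3) (Fin 3) ℝ) (t : ℝ) :
    (Dmat A t)ᵀ =
    !![0, 1, 0, 0;
       A 0 0 * Real.cosh t * Real.sinh t, 1, A 0 2 * Real.sinh t, -(A 0 1) * Real.sinh t;
       A 0 1 * Real.cosh t * Real.sinh t, 0, Real.cosh t + A 1 2 * Real.sinh t, -(A 1 1) * Real.sinh t;
       A 0 2 * Real.cosh t * Real.sinh t, 0, A 2 2 * Real.sinh t, Real.cosh t - A 1 2 * Real.sinh t] := by
  ext i j
  fin_cases i <;> fin_cases j <;> simp [Dmat, Matrix.vecHead, Matrix.vecTail]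

set_option maxHeartbeats 2000000 in
theorem stmt_2 (A : Matrix (Fin 3) (Fin 3) ℝ) (hA : A.IsSymm) (t : ℝ) :
    Gmat * (Dmat A t)ᵀ * Omat * Dmat A t * Gmat =
      (Dmat A (-t))ᵀ * Omat * Dmat A (-t) := by
  rw [Dmat_transpose, Dmat_transpose]
  ext i j
  fin_cases i <;> fin_cases j <;>
    simp [Dmat, Omat, Gmat, Matrix.mul_apply, Fin.sum_univ_four, Real.cosh_neg,
      Real.sinh_neg, Matrix.vecHead, Matrix.vecTail] <;> ring
end
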